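/- arXiv:2602.01784 — 4 statements merged into one kernel-verified Lean document; each statement's English description precedes it below -/
import Mathlib

section
/- Let k be a number field, L/k a finite Galois extension of degree m, and suppose θ_1, ..., θ_m ∈ 𝒪_L form a basis of L over k, with |θ_i^σ|_τ ≤ B for every embedding τ: L → ℂ extending an embedding of k and every σ ∈ Gal(L/k). Then the absolute norm N_{k/ℚ}(Δ_{L/k}) of the relative discriminant is at most (m! · B^m)^{2[k:ℚ]}. -/
/-!
Write `δ = det(θ_i^{σ_j})`. Then `δ² = disc_{L/k}(θ)`, which is a nonzero element of `k`, and
`Δ ⊇ (δ²)` gives `N(Δ) ≤ |N_{k/ℚ}(δ²)|`. Every embedding of `k` into `ℂ` extends to `L`, where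
`δ` becomes a Leibniz sum of `m!` products of `m` conjugates of the `θ_i`, so each conjugate of
`δ²` is at most `(m! B^m)²` in absolute value; the norm is the product of the `[k:ℚ]` conjugates.
-/

open NumberField

theorem Algebra.algebraMap_discr_eq_det_aut_pow_two {k L ι : Type*} [Field k] [Field L]
    [Algebra k L] [FiniteDimensional k L] [IsGalois k L] [Fintype ι] [DecidableEq ι]
    (b : Module.Basis ι k L) (e : ι ≃ Gal(L/k)) :
    algebraMap k L (Algebra.discr k b) = (Matrix.of fun i j => e j (b i)).det ^ 2 := by
  let E := AlgebraicClosure L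
  apply FaithfulSMul.algebraMap_injective L E
  have hemb : Algebra.embeddingsMatrixReindex k E b (e.trans (Normal.algHomEquivAut k E L).symm)
      = (Matrix.of fun i j => e j (b i)).map (algebraMap L E) := by
    ext i j
    simp [Algebra.embeddingsMatrixReindex, Algebra.embeddingsMatrix]
  rw [← IsScalarTower.algebraMap_apply, Algebra.discr_eq_det_embeddingsMatrixReindex_pow_two k E b
    (e.trans (Normal.algHomEquivAut k E L).symm), hemb, map_pow, RingHom.map_det]
  rfl

theorem NumberField.abs_norm_le_of_forall_norm_embedding_le {K : Type*} [Field K] [NumberField K]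
    {x : K} {C : ℝ} (h : ∀ φ : K →+* ℂ, ‖φ x‖ ≤ C) :
    |(Algebra.norm ℚ x : ℝ)| ≤ C ^ Module.finrank ℚ K := by
  have hnorm := congrArg (‖·‖) (Algebra.norm_eq_prod_embeddings ℚ ℂ x)
  simp only [eq_ratCast, Complex.norm_ratCast, norm_prod] at hnorm
  rw [hnorm, ← AlgHom.card ℚ K ℂ, ← Finset.card_univ, ← Finset.prod_const]
  exact Finset.prod_le_prod (fun _ _ ↦ norm_nonneg _) fun φ _ ↦ h φ.toRingHom

theorem Ideal.absNorm_le_absNorm_of_le {S : Type*} [CommRing S] [IsDedekindDomain S]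
    [Module.Free ℤ S] [Module.Finite ℤ S] {I J : Ideal S} (h : J ≤ I) (hJ : J ≠ ⊥) :
    Ideal.absNorm I ≤ Ideal.absNorm J :=
  Nat.le_of_dvd (Nat.pos_of_ne_zero (Ideal.absNorm_eq_zero_iff.not.mpr hJ))
    (Ideal.absNorm_dvd_absNorm_of_le h)

theorem stmt2_general (k L : Type*) [Field k] [NumberField k] [Field L] [NumberField L]
    [Algebra k L] [IsGalois k L] (m : ℕ)
    (θ : Fin m → 𝓞 L) (b : Module.Basis (Fin m) k L) (hb : ∀ i, b i = (θ i : L))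
    (e : Fin m ≃ (L ≃ₐ[k] L)) (B : ℝ)
    (hB : ∀ (τ : L →+* ℂ) (i j : Fin m), ‖τ ((e j) ((θ i : L)))‖ ≤ B)
    (Δ : Ideal (𝓞 k)) (x : 𝓞 k)
    (hx : algebraMap k L (x : k) = (Matrix.det (Matrix.of fun i j => (e j) ((θ i : L)))) ^ 2)
    (hdvd : Ideal.span {x} ≤ Δ) :
    (Ideal.absNorm Δ : ℝ) ≤ ((m.factorial : ℝ) * B ^ m) ^ (2 * Module.finrank ℚ k) := by
  have : FiniteDimensional k L := .right ℚ k L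
  have hx_discr : (x : k) = Algebra.discr k b := by
    apply FaithfulSMul.algebraMap_injective k L
    simp only [hx, Algebra.algebraMap_discr_eq_det_aut_pow_two b e, hb]
  have hx0 : x ≠ 0 := by
    rintro rfl
    exact Algebra.discr_not_zero_of_basis k b (by simpa using hx_discr.symm)
  have hembed (σ : k →+* ℂ) : ‖σ x‖ ≤ ((m.factorial : ℝ) * B ^ m) ^ 2 := by
    let τ := ComplexEmbedding.lift L σ
    have hdet : place τ (Matrix.of fun i j => (e j) ((θ i : L))).det ≤ m.factorial * B ^ m := by
      simpa only [Fintype.card_fin, nsmul_eq_mul] using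
        Matrix.det_le (A := Matrix.of fun i j => (e j) ((θ i : L))) (abv := place τ) (hB τ)
    rw [← ComplexEmbedding.lift_algebraMap_apply L σ, hx, map_pow, norm_pow]
    exact pow_le_pow_left₀ (norm_nonneg _) hdet 2
  calc (Ideal.absNorm Δ : ℝ) ≤ Ideal.absNorm (Ideal.span {x}) := by
        exact_mod_cast Ideal.absNorm_le_absNorm_of_le hdvd (by simpa using hx0)
    _ = |(Algebra.norm ℚ (x : k) : ℝ)| := by
        rw [Ideal.absNorm_span_singleton, ← Algebra.coe_norm_int, Nat.cast_natAbs, Int.cast_abs,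
          Rat.cast_intCast]
    _ ≤ ((m.factorial : ℝ) * B ^ m) ^ (2 * Module.finrank ℚ k) := by
        rw [pow_mul]
        exact NumberField.abs_norm_le_of_forall_norm_embedding_le hembed

/-- Let `L/k` be a finite Galois extension of number fields of degree `m`, and let
`θ₁, …, θ_m ∈ 𝒪_L` form a basis of `L` over `k` with `|θ_i^σ|_τ ≤ B` for every embedding
`τ : L → ℂ` and every `σ ∈ Gal(L/k)`. Then the absolute norm of the relative discriminant
`Δ_{L/k}` (an ideal of `𝒪_k` dividing the principal ideal generated by
`det((θ_i^{σ_j}))²`) is at most `(m! · B^m)^{2[k:ℚ]}`. -/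
theorem stmt2 (k L : Type*) [Field k] [NumberField k] [Field L] [NumberField L]
    [Algebra k L] [IsGalois k L] (m : ℕ) (hm : Module.finrank k L = m)
    (θ : Fin m → 𝓞 L) (b : Module.Basis (Fin m) k L) (hb : ∀ i, b i = (θ i : L))
    (e : Fin m ≃ (L ≃ₐ[k] L)) (B : ℝ)
    (hB : ∀ (τ : L →+* ℂ) (i j : Fin m), ‖τ ((e j) ((θ i : L)))‖ ≤ B)
    (Δ : Ideal (𝓞 k)) (x : 𝓞 k)
    (hx : algebraMap k L (x : k) = (Matrix.det (Matrix.of fun i j => (e j) ((θ i : L)))) ^ 2)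
    (hdvd : Ideal.span {x} ≤ Δ) :
    (Ideal.absNorm Δ : ℝ) ≤ ((m.factorial : ℝ) * B ^ m) ^ (2 * Module.finrank ℚ k) :=
  stmt2_general k L m θ b hb e B hB Δ x hx hdvd
end

section
/- Let T be the compact torus ℝ^m/(2π)ℤ^m, let Q: ℝ^n → ℝ^m be a linear map, q: ℝ^n → T the induced map, and let T₀ be the closure of q(ℝ^n) in T. Then T₀ is a closed subgroup (subtorus) of T and for every smooth function f on T and every H₀ ∈ ℝ^n, (1/vol B(H₀,R)) ∫_{B(H₀,R)} f(q(H)) dH converges as R → ∞ to the average of f over T₀ with respect to its Haar probability measure, uniformly in H₀. -/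
/-!
Both sides of the claimed limit are continuous linear functionals of `f` of norm at most one, so
the set of `f ∈ C(T, ℂ)` for which the ball averages converge uniformly in the centre is a closed
subspace; by Stone–Weierstrass it suffices to treat the characters `χ_k`. Pulled back along `q`,
`χ_k` becomes the additive character `H ↦ exp (i ℓ_k H)` of `ℝⁿ`, where `ℓ_k = Qᵀ k`. If
`ℓ_k = 0` then `χ_k = 1` on `T₀` and both sides equal `1`. Otherwise `χ_k` takes the value `-1` at
a point of `q(ℝⁿ) ⊆ T₀`, so its Haar integral over `T₀` vanishes, while by Fubini the average of
`exp (i ℓ_k H)` over a cube of side `2R` is `O(1 / R)`.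
-/

open MeasureTheory Set Filter Topology Complex Metric
open scoped Real NNReal

namespace ContinuousLinearMap

variable {𝕜 E F α ι : Type*} [NontriviallyNormedField 𝕜] [SeminormedAddCommGroup E]
  [NormedSpace 𝕜 E] [SeminormedAddCommGroup F] [NormedSpace 𝕜 F]

def tendstoUniformlySubmodule (Λ : α → ι → E →L[𝕜] F) (Λ₀ : E →L[𝕜] F) (l : Filter α) :
    Submodule 𝕜 E where
  carrier := {x | TendstoUniformly (fun a i => Λ a i x) (fun _ => Λ₀ x) l}
  zero_mem' := by simpa using (tendsto_const_nhds (x := (0 : F))).tendstoUniformly_const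
  add_mem' hx hy := by
    simp only [mem_ofPred_eq, map_add]
    exact hx.add hy
  smul_mem' c _ hx := by
    simp only [mem_ofPred_eq, map_smul]
    exact (uniformContinuous_const_smul c).comp_tendstoUniformly hx

@[simp]
theorem mem_tendstoUniformlySubmodule {Λ : α → ι → E →L[𝕜] F} {Λ₀ : E →L[𝕜] F} {l : Filter α}
    {x : E} : x ∈ tendstoUniformlySubmodule Λ Λ₀ l ↔
      TendstoUniformly (fun a i => Λ a i x) (fun _ => Λ₀ x) l :=
  Iff.rfl

theorem isClosed_tendstoUniformlySubmodule (Λ : α → ι → E →L[𝕜] F) (Λ₀ : E →L[𝕜] F)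
    (l : Filter α) (C : ℝ≥0) (hΛ : ∀ a i, ‖Λ a i‖₊ ≤ C) :
    IsClosed (tendstoUniformlySubmodule Λ Λ₀ l : Set E) := by
  have hequi : Equicontinuous fun a (x : E) => UniformFun.ofFun fun i => Λ a i x :=
    (LipschitzWith.uniformEquicontinuous _ C fun a => UniformFun.lipschitzWith_ofFun_iff.2
      fun i => (Λ a i).lipschitz.weaken (hΛ a i)).equicontinuous
  have hlim : Continuous fun x : E => UniformFun.ofFun fun _ : ι => Λ₀ x :=
    (UniformFun.lipschitzWith_ofFun_iff.2 fun _ => LipschitzWith.id).continuous.comp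
      Λ₀.continuous
  convert hequi.isClosed_setOfPred_tendsto hlim (l := l) using 1
  ext x
  exact UniformFun.tendsto_iff_tendstoUniformly.symm

end ContinuousLinearMap

namespace ContinuousMap

variable {X E : Type*} [TopologicalSpace X] [CompactSpace X] [MeasurableSpace X]
  [OpensMeasurableSpace X] [NormedAddCommGroup E] [SecondCountableTopologyEither X E]
  (μ : Measure X) [IsFiniteMeasure μ]

theorem integrable (g : C(X, E)) : Integrable g μ :=
  .of_bound g.continuous.aestronglyMeasurable ‖g‖ (.of_forall g.norm_coe_le_norm)

variable [NormedSpace ℝ E] (𝕜 : Type*) [NontriviallyNormedField 𝕜] [NormedSpace 𝕜 E]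
  [SMulCommClass ℝ 𝕜 E]

noncomputable def integralCLM : C(X, E) →L[𝕜] E :=
  LinearMap.mkContinuous
    { toFun g := ∫ x, g x ∂μ
      map_add' g h := integral_add (g.integrable μ) (h.integrable μ)
      map_smul' c g := integral_smul c g }
    (μ.real univ) fun g => by
      rw [mul_comm]
      exact norm_integral_le_of_norm_le_const (.of_forall g.norm_coe_le_norm)

@[simp]
theorem integralCLM_apply (g : C(X, E)) : integralCLM μ 𝕜 g = ∫ x, g x ∂μ := rfl

theorem norm_integralCLM_le : ‖(integralCLM μ 𝕜 : C(X, E) →L[𝕜] E)‖ ≤ μ.real univ :=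
  LinearMap.mkContinuous_norm_le _ measureReal_nonneg _

end ContinuousMap

theorem norm_setIntegral_ball_exp_mul_I_le {a : ℝ} (ha : a ≠ 0) (c : ℝ) {R : ℝ} (hR : 0 ≤ R) :
    ‖∫ t in ball c R, exp (↑(a * t) * I)‖ ≤ 2 / |a| := by
  have haI : (a * I : ℂ) ≠ 0 := by simp [ha]
  have hexp : ∀ t : ℝ, exp (↑(a * t) * I) = exp (a * I * t) := fun t => by push_cast; ring_nf
  rw [Real.ball_eq_Ioo, ← integral_Ioc_eq_integral_Ioo,
    ← intervalIntegral.integral_of_le (by linarith)]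
  simp_rw [hexp]
  rw [integral_exp_mul_complex haI, norm_div, norm_mul, norm_I, mul_one, norm_real,
    Real.norm_eq_abs]
  gcongr
  refine (norm_sub_le _ _).trans_eq ?_
  rw [← hexp, ← hexp, norm_exp_ofReal_mul_I, norm_exp_ofReal_mul_I, one_add_one_eq_two]

-- `ι → ℝ` carries the sup norm, so `ball H₀ R` is the cube `∏ j, ball (H₀ j) R`.
theorem setIntegral_ball_exp_sum_eq_prod {ι : Type*} [Fintype ι] (a H₀ : ι → ℝ) {R : ℝ}
    (hR : 0 < R) :
    ∫ H in ball H₀ R, exp (↑(∑ j, a j * H j) * I) =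
      ∏ j, ∫ t in ball (H₀ j) R, exp (↑(a j * t) * I) := by
  rw [ball_pi H₀ hR, volume_pi, Measure.restrict_pi_pi, ← integral_fintype_prod_eq_prod]
  congr 1 with H
  push_cast
  rw [Finset.sum_mul, exp_sum]

theorem norm_setAverage_ball_exp_sum_le {ι : Type*} [Fintype ι] (a H₀ : ι → ℝ) {j : ι}
    (hj : a j ≠ 0) {R : ℝ} (hR : 0 < R) :
    ‖⨍ H in ball H₀ R, exp (↑(∑ j, a j * H j) * I)‖ ≤ 1 / (|a j| * R) := by
  classical
  have hvol : volume.real (ball H₀ R) = ∏ _ : ι, 2 * R := by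
    rw [measureReal_def, Real.volume_pi_ball _ hR, ENNReal.toReal_ofReal (by positivity),
      Finset.prod_const, Finset.card_univ]
  set b : ι → ℝ := fun i => ‖∫ t in ball (H₀ i) R, exp (↑(a i * t) * I)‖ / (2 * R)
  have hb₀ : ∀ i, 0 ≤ b i := fun i => by positivity
  have hb₁ : ∀ i, b i ≤ 1 := fun i => by
    rw [div_le_one (by positivity)]
    refine (norm_setIntegral_le_of_norm_le_const measure_ball_lt_top
      fun t _ => (norm_exp_ofReal_mul_I _).le).trans_eq ?_
    rw [one_mul, Real.volume_real_ball hR.le]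
  calc ‖⨍ H in ball H₀ R, exp (↑(∑ j, a j * H j) * I)‖ = ∏ i, b i := by
        rw [setAverage_eq, setIntegral_ball_exp_sum_eq_prod a H₀ hR, hvol, norm_smul, norm_inv,
          Real.norm_of_nonneg (by positivity), norm_prod, Finset.prod_div_distrib, inv_mul_eq_div]
    _ = b j * ∏ i ∈ Finset.univ.erase j, b i :=
        (Finset.mul_prod_erase _ _ (Finset.mem_univ j)).symm
    _ ≤ b j :=
        mul_le_of_le_one_right (hb₀ j) (Finset.prod_le_one (fun i _ => hb₀ i) fun i _ => hb₁ i)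
    _ ≤ 2 / |a j| / (2 * R) :=
        div_le_div_of_nonneg_right (norm_setIntegral_ball_exp_mul_I_le hj _ hR.le) (by positivity)
    _ = 1 / (|a j| * R) := by field_simp

theorem LinearMap.apply_eq_sum_mul_single {ι : Type*} [Fintype ι] [DecidableEq ι]
    (ℓ : (ι → ℝ) →ₗ[ℝ] ℝ) (H : ι → ℝ) :
    ℓ H = ∑ j, ℓ (Pi.single j 1) * H j := by
  conv_lhs => rw [← Finset.univ_sum_single H]
  refine (map_sum ℓ _ _).trans (Finset.sum_congr rfl fun j _ => ?_)
  rw [mul_comm, ← smul_eq_mul, ← map_smul, ← Pi.single_smul, smul_eq_mul, mul_one]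

theorem tendstoUniformly_setAverage_ball_exp {ι : Type*} [Fintype ι] {ℓ : (ι → ℝ) →ₗ[ℝ] ℝ}
    (hℓ : ℓ ≠ 0) :
    TendstoUniformly (fun R H₀ => ⨍ H in ball H₀ R, exp (↑(ℓ H) * I)) 0 atTop := by
  classical
  obtain ⟨j, hj⟩ : ∃ j, ℓ (Pi.single j 1) ≠ 0 := by
    contrapose! hℓ
    refine LinearMap.ext fun H => ?_
    simp [ℓ.apply_eq_sum_mul_single H, hℓ]
  have hlim : Tendsto (fun R => 1 / (|ℓ (Pi.single j 1)| * R)) atTop (𝓝 0) :=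
    tendsto_const_nhds.div_atTop (tendsto_id.const_mul_atTop (abs_pos.2 hj))
  refine Metric.tendstoUniformly_iff.2 fun ε hε => ?_
  filter_upwards [hlim.eventually (gt_mem_nhds hε), eventually_gt_atTop 0] with R hRε hR H₀
  rw [Pi.zero_apply, dist_zero_left]
  have hcoord : (fun H => exp (↑(ℓ H) * I)) =
      fun H => exp (↑(∑ j, ℓ (Pi.single j 1) * H j) * I) :=
    funext fun H => by rw [ℓ.apply_eq_sum_mul_single H]
  rw [hcoord]
  exact (norm_setAverage_ball_exp_sum_le _ H₀ hj hR).trans_lt hRε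

namespace AddCircle

variable {d : Type*} [Fintype d] (p : ℝ) [hp : Fact (0 < p)]

noncomputable def piHomeomorphUnitAddTorus : (d → AddCircle p) ≃ₜ UnitAddTorus d :=
  Homeomorph.piCongrRight fun _ => homeomorphAddCircle p 1 hp.out.ne' one_ne_zero

noncomputable def torusChar (k : d → ℤ) : C(d → AddCircle p, ℂ) :=
  (UnitAddTorus.mFourier k).comp
    (piHomeomorphUnitAddTorus (d := d) p : C(d → AddCircle p, UnitAddTorus d))

theorem torusChar_apply_coe (k : d → ℤ) (y : d → ℝ) :
    torusChar p k (fun i => (y i : AddCircle p)) = exp (↑(2 * π / p * ∑ i, k i * y i) * I) := by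
  simp only [torusChar, UnitAddTorus.mFourier, piHomeomorphUnitAddTorus, ContinuousMap.comp_apply,
    ContinuousMap.coe_mk, Homeomorph.piCongrRight_apply, homeomorphAddCircle_apply_mk,
    fourier_coe_apply, ← exp_sum]
  congr 1
  push_cast
  rw [Finset.mul_sum, Finset.sum_mul]
  refine Finset.sum_congr rfl fun i _ => ?_
  field_simp

theorem torusChar_add (k : d → ℤ) (x y : d → AddCircle p) :
    torusChar p k (x + y) = torusChar p k x * torusChar p k y := by
  have he : piHomeomorphUnitAddTorus p (x + y) =
      piHomeomorphUnitAddTorus p x + piHomeomorphUnitAddTorus p y :=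
    funext fun i => map_add (equivAddCircle p 1 hp.out.ne' one_ne_zero) (x i) (y i)
  simp only [torusChar, ContinuousMap.comp_apply, he, UnitAddTorus.mFourier,
    ContinuousMap.coe_mk, Pi.add_apply, fourier_apply, smul_add, toCircle_add, Circle.coe_mul,
    Finset.prod_mul_distrib]

theorem span_torusChar_dense :
    (Submodule.span ℂ (range (torusChar (d := d) p))).topologicalClosure = ⊤ := by
  let e := piHomeomorphUnitAddTorus (d := d) p
  let Φ : C(UnitAddTorus d, ℂ) →L[ℂ] C(d → AddCircle p, ℂ) :=
    ⟨(ContinuousMap.compStarAlgHom' ℂ ℂ (e : C(d → AddCircle p, UnitAddTorus d))).toLinearMap,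
      ContinuousMap.continuous_precomp _⟩
  have hΦ : DenseRange Φ := Function.Surjective.denseRange fun g =>
    ⟨g.comp (e.symm : C(UnitAddTorus d, d → AddCircle p)), by
      ext x
      exact congrArg g (e.symm_apply_apply x)⟩
  have := hΦ.topologicalClosure_map_submodule UnitAddTorus.span_mFourier_closure_eq_top
  rw [Submodule.map_span, ← range_comp] at this
  exact this

end AddCircle

section BallAverage

variable {E X : Type*} [PseudoMetricSpace E] [ProperSpace E] [MeasurableSpace E]
  (μ : Measure E) [IsFiniteMeasureOnCompacts μ] [TopologicalSpace X] [CompactSpace X]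
  [MeasurableSpace X] [OpensMeasurableSpace X]

instance (x : E) (r : ℝ) : IsFiniteMeasure (μ.restrict (ball x r)) :=
  isFiniteMeasure_restrict.2 measure_ball_lt_top.ne

noncomputable def ballAverageCLM (φ : E → X) (R : ℝ) (x₀ : E) : C(X, ℂ) →L[ℂ] ℂ :=
  (μ.real (ball x₀ R))⁻¹ • ContinuousMap.integralCLM ((μ.restrict (ball x₀ R)).map φ) ℂ

variable {μ} {φ : E → X}

theorem ballAverageCLM_apply (hφ : Measurable φ) (R : ℝ) (x₀ : E) (g : C(X, ℂ)) :
    ballAverageCLM μ φ R x₀ g = ⨍ x in ball x₀ R, g (φ x) ∂μ := by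
  rw [ballAverageCLM, smul_apply, ContinuousMap.integralCLM_apply,
    integral_map hφ.aemeasurable g.continuous.aestronglyMeasurable, setAverage_eq]

theorem norm_ballAverageCLM_le (hφ : Measurable φ) (R : ℝ) (x₀ : E) :
    ‖ballAverageCLM μ φ R x₀‖ ≤ 1 := by
  rw [ballAverageCLM, norm_smul]
  grw [ContinuousMap.norm_integralCLM_le]
  rw [map_measureReal_apply hφ .univ, preimage_univ, measureReal_restrict_apply_univ, norm_inv,
    Real.norm_of_nonneg measureReal_nonneg]
  exact inv_mul_le_one

end BallAverage

section LinearTorusMap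

open AddCircle

variable {ι d : Type*} (p : ℝ) (Q : (ι → ℝ) →ₗ[ℝ] (d → ℝ))

def linearTorusMap : (ι → ℝ) →+ (d → AddCircle p) where
  toFun H i := (Q H i : AddCircle p)
  map_zero' := by ext; simp
  map_add' H H' := by ext; simp

theorem continuous_linearTorusMap [Fintype ι] : Continuous (linearTorusMap p Q) :=
  continuous_pi fun i => (AddCircle.continuous_mk' p).comp
    ((continuous_apply i).comp Q.continuous_of_finiteDimensional)

variable [Fintype d] [Fact (0 < p)]

noncomputable def charFrequency (k : d → ℤ) : (ι → ℝ) →ₗ[ℝ] ℝ :=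
  (2 * π / p) • ∑ i, (k i : ℝ) • (LinearMap.proj i ∘ₗ Q)

theorem torusChar_linearTorusMap (k : d → ℤ) (H : ι → ℝ) :
    torusChar p k (linearTorusMap p Q H) = exp (↑(charFrequency p Q k H) * I) := by
  simp [linearTorusMap, torusChar_apply_coe, charFrequency]

variable {p Q}

theorem torusChar_eq_one_of_charFrequency_eq_zero {k : d → ℤ} (hk : charFrequency p Q k = 0)
    {x : d → AddCircle p} (hx : x ∈ (linearTorusMap p Q).range.topologicalClosure) :
    torusChar p k x = 1 := by
  rw [← SetLike.mem_coe, AddSubgroup.topologicalClosure_coe, AddMonoidHom.coe_range] at hx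
  refine closure_minimal ?_ (isClosed_eq (torusChar p k).continuous continuous_const) hx
  rintro _ ⟨H, rfl⟩
  simp [torusChar_linearTorusMap, hk]

theorem integral_torusChar_eq_zero_of_charFrequency_ne_zero {k : d → ℤ}
    (hk : charFrequency p Q k ≠ 0) (μ : Measure (linearTorusMap p Q).range.topologicalClosure)
    [μ.IsAddLeftInvariant] :
    ∫ x, torusChar p k x ∂μ = 0 := by
  obtain ⟨v, hv⟩ : ∃ v, charFrequency p Q k v ≠ 0 := by
    contrapose! hk
    exact LinearMap.ext hk
  set t := linearTorusMap p Q ((π / charFrequency p Q k v) • v)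
  have ht : torusChar p k t = -1 := by
    rw [torusChar_linearTorusMap, map_smul, smul_eq_mul, div_mul_cancel₀ _ hv, exp_pi_mul_I]
  refine integral_eq_zero_of_add_left_eq_neg (g := ⟨t, ?_⟩) fun x => ?_
  · exact AddSubgroup.le_topologicalClosure _ ⟨_, rfl⟩
  · simp [torusChar_add, ht]

theorem tendstoUniformly_setAverage_torusChar [Fintype ι] (k : d → ℤ)
    (μ : Measure (linearTorusMap p Q).range.topologicalClosure) [μ.IsAddLeftInvariant]
    [IsProbabilityMeasure μ] :
    TendstoUniformly (fun R H₀ => ⨍ H in ball H₀ R, torusChar p k (linearTorusMap p Q H))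
      (fun _ => ∫ x, torusChar p k x ∂μ) atTop := by
  simp_rw [torusChar_linearTorusMap]
  by_cases hk : charFrequency p Q k = 0
  · have hT₀ : ∫ x, torusChar p k x ∂μ = 1 := by
      simp [torusChar_eq_one_of_charFrequency_eq_zero hk (Subtype.prop _)]
    refine Metric.tendstoUniformly_iff.2 fun ε hε => ?_
    filter_upwards [eventually_gt_atTop 0] with R hR H₀
    simp only [hT₀, hk, LinearMap.zero_apply, ofReal_zero, zero_mul, exp_zero,
      setAverage_const (measure_ball_pos volume H₀ hR).ne' measure_ball_lt_top.ne, dist_self]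
    exact hε
  · rw [integral_torusChar_eq_zero_of_charFrequency_ne_zero hk]
    exact tendstoUniformly_setAverage_ball_exp hk

theorem tendstoUniformly_setAverage_linearTorusMap [Fintype ι]
    (μ : Measure (linearTorusMap p Q).range.topologicalClosure) [μ.IsAddLeftInvariant]
    [IsProbabilityMeasure μ] (g : C(d → AddCircle p, ℂ)) :
    TendstoUniformly (fun R H₀ => ⨍ H in ball H₀ R, g (linearTorusMap p Q H))
      (fun _ => ∫ x, g x ∂μ) atTop := by
  have hq := (continuous_linearTorusMap p Q).measurable
  set V := ContinuousLinearMap.tendstoUniformlySubmodule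
    (ballAverageCLM volume (linearTorusMap p Q)) (ContinuousMap.integralCLM (μ.map Subtype.val) ℂ)
    atTop
  have hV : ∀ g, g ∈ V ↔
      TendstoUniformly (fun R H₀ => ⨍ H in ball H₀ R, g (linearTorusMap p Q H))
        (fun _ => ∫ x, g x ∂μ) atTop := fun g => by
    rw [ContinuousLinearMap.mem_tendstoUniformlySubmodule, ContinuousMap.integralCLM_apply,
      integral_map continuous_subtype_val.aemeasurable g.continuous.aestronglyMeasurable]
    simp only [ballAverageCLM_apply hq]
  have hVclosed : IsClosed (V : Set C(d → AddCircle p, ℂ)) :=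
    ContinuousLinearMap.isClosed_tendstoUniformlySubmodule _ _ _ 1 fun R H₀ =>
      norm_ballAverageCLM_le hq R H₀
  have hspan : Submodule.span ℂ (range (torusChar p)) ≤ V := by
    rw [Submodule.span_le]
    rintro _ ⟨k, rfl⟩
    exact (hV _).2 (tendstoUniformly_setAverage_torusChar k μ)
  have hg : g ∈ (Submodule.span ℂ (range (torusChar p))).topologicalClosure := by
    rw [span_torusChar_dense]
    trivial
  exact (hV g).1 (Submodule.topologicalClosure_minimal _ hspan hVclosed hg)

end LinearTorusMap

/-- Let `T = ℝ^m/(2π)ℤ^m`, `Q : ℝ^n → ℝ^m` a linear map, `q : ℝ^n → T` the induced map, and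
`T₀` the closure of `q(ℝ^n)` in `T`. Then `T₀` is a closed subgroup of `T` and for every
smooth (here: continuous) function `f` on `T`, the ball averages
`(1/vol B(H₀,R)) ∫_{B(H₀,R)} f(q(H)) dH` converge, as `R → ∞` and uniformly in `H₀`, to the
average of `f` over `T₀` with respect to its Haar probability measure. -/
theorem stmt11 (m n : ℕ) (Q : (Fin n → ℝ) →ₗ[ℝ] (Fin m → ℝ))
    (q : (Fin n → ℝ) → (Fin m → AddCircle (2 * Real.pi)))
    (hq : ∀ H i, q H i = ((Q H i : ℝ) : AddCircle (2 * Real.pi))) :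
    ∃ T₀ : AddSubgroup (Fin m → AddCircle (2 * Real.pi)),
      (T₀ : Set (Fin m → AddCircle (2 * Real.pi))) = closure (Set.range q) ∧
      IsClosed (T₀ : Set (Fin m → AddCircle (2 * Real.pi))) ∧
      ∀ f : (Fin m → AddCircle (2 * Real.pi)) → ℝ, Continuous f →
      ∀ μ : Measure T₀, μ.IsAddHaarMeasure → IsProbabilityMeasure μ →
      ∀ ε > 0, ∃ R₀ : ℝ, ∀ R ≥ R₀, ∀ H₀ : Fin n → ℝ,
        |(volume (Metric.ball H₀ R)).toReal⁻¹ *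
            (∫ H in Metric.ball H₀ R, f (q H)) -
          ∫ x : T₀, f (x : Fin m → AddCircle (2 * Real.pi)) ∂μ| < ε := by
  have : Fact (0 < 2 * π) := ⟨Real.two_pi_pos⟩
  obtain rfl : q = linearTorusMap (2 * π) Q := funext fun H => funext (hq H)
  refine ⟨(linearTorusMap _ Q).range.topologicalClosure, by
    rw [AddSubgroup.topologicalClosure_coe, AddMonoidHom.coe_range],
    AddSubgroup.isClosed_topologicalClosure _, fun f hf μ _ _ ε hε => ?_⟩
  obtain ⟨R₀, hR₀⟩ := eventually_atTop.1 <| Metric.tendstoUniformly_iff.1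
    (tendstoUniformly_setAverage_linearTorusMap μ ⟨fun x => (f x : ℂ), by fun_prop⟩) ε hε
  refine ⟨R₀, fun R hR H₀ => ?_⟩
  have h := hR₀ R hR H₀
  rw [dist_comm, dist_eq, setAverage_eq] at h
  simpa [integral_complex_ofReal, ← ofReal_inv, ← ofReal_mul, ← ofReal_sub, measureReal_def]
    using h
end

section
/- Let G be a group, T an abelian subgroup, N a subgroup normalized by T, and suppose N has a filtration by the lower central series with n_λ: k → N_λ coordinate isomorphisms as in a unipotent group over a field k. Then for γ ∈ T and n ∈ N, the commutator γ n^{-1} γ^{-1} n, expressed in the coordinates n_λ, has λ-coordinate equal to (1 − λ(γ))t_λ plus a polynomial (with coefficients independent of γ, n) in the coordinates t_ν and values ν(γ) for roots ν that sum to λ with each ν strictly smaller in the chosen order. -/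
/-!
Collection process. A word of level `j` is an ordered product `∏_{l ≥ j} n_l(g_l)` whose
coordinates `g_l` are polynomials in variables of level `≤ l` (a variable `t_ν` or `ν(γ)` has
level `ν`). By downward induction on `j`, such words are closed under products, inverses, and
conjugation by `n_i(f)` for `i < j`, the new coordinates being `g + h`, `-g`, resp. `g` up to
polynomials in variables of level `< l`. Conjugation is the key case: moving `n_i(f)` past the
leading factor `n_j(g_j)` creates the commutator of `n_i(f)` and `n_j(g_j)`, which by hypothesis is
a word of level `j + 1` whose coordinates are polynomials in `f` and `g_j`, hence of level `< l`.
Then `γ n⁻¹ γ⁻¹ n = (∏ n_l(χ_l t_l))⁻¹ * ∏ n_l(t_l)` has coordinates `t_l - χ_l t_l` up to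
lower terms.
-/

open MvPolynomial

noncomputable section

namespace UnipotentCollection

variable {G : Type*} [Group G] {k : Type*} [CommRing k] {m : ℕ} {σ : Type*}

theorem bind₁_mem {τ : Type*} {S : Subalgebra k (MvPolynomial σ k)} {h : τ → MvPolynomial σ k}
    (hh : ∀ i, h i ∈ S) (φ : MvPolynomial τ k) : bind₁ h φ ∈ S :=
  aeval_eq_bind₁ (R := k) h ▸ Algebra.adjoin_le (Set.range_subset_iff.2 hh)
    (aeval_range (R := k) h ▸ AlgHom.mem_range_self _ φ)

theorem eval_bind₁ (x : σ → k) {τ : Type*} (h : τ → MvPolynomial σ k) (φ : MvPolynomial τ k) :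
    eval x (bind₁ h φ) = eval (fun i => eval x (h i)) φ :=
  eval₂Hom_bind₁ _ _ _ _

section Filtration

variable (k) (ℓ : σ → ℕ)

def supportedBelow (c : ℕ) : Subalgebra k (MvPolynomial σ k) :=
  supported k {s | ℓ s < c}

variable {k} in
theorem supportedBelow_mono {c d : ℕ} (h : c ≤ d) :
    supportedBelow k ℓ c ≤ supportedBelow k ℓ d :=
  supported_mono fun _ hs => lt_of_lt_of_le hs h

def lowerTerms : AddSubgroup (Fin m → MvPolynomial σ k) :=
  AddSubgroup.pi Set.univ fun l => (supportedBelow k ℓ l).toSubring.toAddSubgroup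

def triangular : AddSubgroup (Fin m → MvPolynomial σ k) :=
  AddSubgroup.pi Set.univ fun l => (supportedBelow k ℓ (l + 1)).toSubring.toAddSubgroup

variable {k ℓ}

theorem mem_lowerTerms {u : Fin m → MvPolynomial σ k} :
    u ∈ lowerTerms k ℓ ↔ ∀ l : Fin m, u l ∈ supportedBelow k ℓ l := by
  simp [lowerTerms, AddSubgroup.mem_pi]

theorem mem_triangular {u : Fin m → MvPolynomial σ k} :
    u ∈ triangular k ℓ ↔ ∀ l : Fin m, u l ∈ supportedBelow k ℓ (l + 1) := by
  simp [triangular, AddSubgroup.mem_pi]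

theorem lowerTerms_le_triangular : (lowerTerms k ℓ : AddSubgroup (Fin m → _)) ≤ triangular k ℓ :=
  fun _ hu => mem_triangular.2 fun l => supportedBelow_mono ℓ l.val.le_succ (mem_lowerTerms.1 hu l)

theorem mem_triangular_of_sub_mem {u v : Fin m → MvPolynomial σ k} (hv : v ∈ triangular k ℓ)
    (h : u - v ∈ lowerTerms k ℓ) : u ∈ triangular k ℓ := by
  simpa using add_mem (lowerTerms_le_triangular h) hv

theorem update_sub_mem_lowerTerms {u v : Fin m → MvPolynomial σ k}
    (h : u - v ∈ lowerTerms k ℓ) (j : Fin m) : Function.update u j (v j) - v ∈ lowerTerms k ℓ := by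
  rw [mem_lowerTerms] at h ⊢
  intro l
  rcases eq_or_ne l j with rfl | hl
  · simp
  · simpa [hl] using h l

end Filtration

section Words

variable (n : Fin m → k → G)

def word (g : Fin m → MvPolynomial σ k) (j : ℕ) (x : σ → k) : G :=
  (((List.finRange m).drop j).map fun l => n l (eval x (g l))).prod

theorem word_zero (g : Fin m → MvPolynomial σ k) (x : σ → k) :
    word n g 0 x = ((List.finRange m).map fun l => n l (eval x (g l))).prod := rfl

theorem word_of_le {j : ℕ} (h : m ≤ j) (g : Fin m → MvPolynomial σ k) (x : σ → k) :
    word n g j x = 1 := by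
  simp [word, List.drop_eq_nil_of_le (by simpa using h : (List.finRange m).length ≤ j)]

theorem word_eq_mul (J : Fin m) (g : Fin m → MvPolynomial σ k) (x : σ → k) :
    word n g J x = n J (eval x (g J)) * word n g (J + 1) x := by
  simp [word, List.drop_eq_getElem_cons (by simp : J.val < (List.finRange m).length)]

theorem word_congr {j : ℕ} {g g' : Fin m → MvPolynomial σ k}
    (h : ∀ l : Fin m, j ≤ l → g l = g' l) (x : σ → k) : word n g j x = word n g' j x := by
  refine congrArg List.prod (List.map_congr_left fun l hl => ?_)
  obtain ⟨i, -, rfl⟩ := List.mem_drop_iff_getElem.1 hl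
  rw [h _ (by simp)]

theorem word_update (J : Fin m) (g : Fin m → MvPolynomial σ k) (a : MvPolynomial σ k)
    (x : σ → k) : word n (Function.update g J a) J x = n J (eval x a) * word n g (J + 1) x := by
  rw [word_eq_mul n J, Function.update_self,
    word_congr n (fun l hl => Function.update_of_ne (Fin.ne_of_val_ne (by omega)) _ _)]

variable {n}

theorem map_zero_eq_one (hn : ∀ i s t, n i (s + t) = n i s * n i t) (i : Fin m) :
    n i 0 = 1 := by
  simpa using hn i 0 0

theorem map_neg_eq_inv (hn : ∀ i s t, n i (s + t) = n i s * n i t) (i : Fin m) (t : k) :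
    n i (-t) = (n i t)⁻¹ :=
  eq_inv_of_mul_eq_one_left (by rw [← hn, neg_add_cancel, map_zero_eq_one hn])

theorem word_zero_eq_word (hn : ∀ i s t, n i (s + t) = n i s * n i t) {j : ℕ}
    {g : Fin m → MvPolynomial σ k} (h : ∀ l : Fin m, l < j → g l = 0) (x : σ → k) :
    word n g 0 x = word n g j x := by
  rw [word_zero, ← List.take_append_drop j (List.finRange m), List.map_append, List.prod_append,
    List.prod_eq_one, one_mul, word]
  simp only [List.mem_map]
  rintro _ ⟨l, hl, rfl⟩
  obtain ⟨i, hi, rfl⟩ := List.mem_iff_getElem.1 hl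
  simp only [List.length_take, List.length_finRange, lt_min_iff] at hi
  rw [h _ (by simpa using hi.1), map_zero, map_zero_eq_one hn]

end Words

section Collection

variable (ℓ : σ → ℕ) (n : Fin m → k → G)

def MulClosed (j : ℕ) : Prop :=
  ∀ g ∈ triangular k ℓ, ∀ h ∈ triangular k ℓ, ∃ u, u - (g + h) ∈ lowerTerms k ℓ ∧
    ∀ x, word n g j x * word n h j x = word n u j x

def InvClosed (j : ℕ) : Prop :=
  ∀ g ∈ triangular k ℓ, ∃ u, u + g ∈ lowerTerms k ℓ ∧ ∀ x, (word n g j x)⁻¹ = word n u j x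

def ConjClosed (j : ℕ) : Prop :=
  ∀ i : Fin m, i < j → ∀ f ∈ supportedBelow k ℓ (i + 1), ∀ g ∈ triangular k ℓ,
    ∃ u, u - g ∈ lowerTerms k ℓ ∧
      ∀ x, (n i (eval x f))⁻¹ * word n g j x * n i (eval x f) = word n u j x

def CommutatorFormula : Prop :=
  ∀ i j : Fin m, i < j → ∃ Q : Fin m → MvPolynomial Bool k,
    (∀ l : Fin m, l ≤ j → Q l = 0) ∧
    ∀ s t : k, (n i s)⁻¹ * (n j t)⁻¹ * n i s * n j t =
      ((List.finRange m).map fun l => n l (eval (fun b => if b then t else s) (Q l))).prod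

def WordsClosed (j : ℕ) : Prop :=
  MulClosed ℓ n j ∧ InvClosed ℓ n j ∧ ConjClosed ℓ n j

variable {ℓ n}

theorem wordsClosed_of_le {j : ℕ} (hj : m ≤ j) : WordsClosed ℓ n j := by
  refine ⟨fun g _ h _ => ⟨g + h, by simp, fun x => ?_⟩, fun g _ => ⟨-g, by simp, fun x => ?_⟩,
    fun i _ f _ g _ => ⟨g, by simp, fun x => ?_⟩⟩ <;> simp [word_of_le n hj]

theorem conjClosed_of_succ (hn : ∀ i s t, n i (s + t) = n i s * n i t)
    (hcomm : CommutatorFormula n) (J : Fin m) (hmul : MulClosed ℓ n (J + 1))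
    (hinv : InvClosed ℓ n (J + 1)) (hconj : ConjClosed ℓ n (J + 1)) : ConjClosed ℓ n J := by
  intro i hiJ f hf g hg
  obtain ⟨Q, hQ0, hQ⟩ := hcomm i J hiJ
  let q : Fin m → MvPolynomial σ k := fun l => bind₁ (fun b => if b then g J else f) (Q l)
  have hq : q ∈ lowerTerms k ℓ := by
    refine mem_lowerTerms.2 fun l => ?_
    rcases le_or_gt l J with hl | hl
    · simp [q, hQ0 l hl]
    · refine bind₁_mem (fun b => ?_) _
      cases b
      · exact supportedBelow_mono ℓ (show i.val + 1 ≤ l by omega) hf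
      · exact supportedBelow_mono ℓ (show J.val + 1 ≤ l by omega) (mem_triangular.1 hg J)
  have hcommutator : ∀ x, (n i (eval x f))⁻¹ * (n J (eval x (g J)))⁻¹ * n i (eval x f) *
      n J (eval x (g J)) = word n q (J + 1) x := by
    intro x
    rw [hQ, ← word_zero_eq_word hn (fun l hl => by simp [q, hQ0 l (Nat.lt_succ_iff.1 hl)])]
    simp [word_zero, q, eval_bind₁, apply_ite]
  obtain ⟨u₁, hu₁, hw₁⟩ := hinv q (lowerTerms_le_triangular hq)
  have hu₁' : u₁ ∈ lowerTerms k ℓ := by simpa using sub_mem hu₁ hq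
  obtain ⟨u₂, hu₂, hw₂⟩ := hconj i (by omega) f hf g hg
  obtain ⟨u₃, hu₃, hw₃⟩ := hmul u₁ (lowerTerms_le_triangular hu₁') u₂
    (mem_triangular_of_sub_mem hg hu₂)
  refine ⟨Function.update u₃ J (g J), update_sub_mem_lowerTerms ?_ J, fun x => ?_⟩
  · convert add_mem (add_mem hu₃ hu₁') hu₂ using 1
    abel
  · rw [word_eq_mul n J, word_update n J, ← hw₃, ← hw₁, ← hcommutator, ← hw₂]
    group

theorem mulClosed_of_succ (hn : ∀ i s t, n i (s + t) = n i s * n i t) (J : Fin m)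
    (hmul : MulClosed ℓ n (J + 1)) (hconj : ConjClosed ℓ n (J + 1)) : MulClosed ℓ n J := by
  intro g hg h hh
  obtain ⟨u₂, hu₂, hw₂⟩ := hconj J (by omega) (h J) (mem_triangular.1 hh J) g hg
  obtain ⟨u₃, hu₃, hw₃⟩ := hmul u₂ (mem_triangular_of_sub_mem hg hu₂) h hh
  refine ⟨Function.update u₃ J ((g + h) J), update_sub_mem_lowerTerms ?_ J, fun x => ?_⟩
  · convert add_mem hu₃ hu₂ using 1
    abel
  · rw [word_eq_mul n J g, word_eq_mul n J h, word_update n J, ← hw₃, ← hw₂, Pi.add_apply,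
      map_add, hn]
    group

theorem invClosed_of_succ (hn : ∀ i s t, n i (s + t) = n i s * n i t) (J : Fin m)
    (hinv : InvClosed ℓ n (J + 1)) (hconj : ConjClosed ℓ n (J + 1)) : InvClosed ℓ n J := by
  intro g hg
  obtain ⟨u₁, hu₁, hw₁⟩ := hinv g hg
  obtain ⟨u₂, hu₂, hw₂⟩ := hconj J (by omega) (-g J) (neg_mem (mem_triangular.1 hg J)) u₁
    (mem_triangular_of_sub_mem (neg_mem hg) (by simpa using hu₁))
  refine ⟨Function.update u₂ J ((-g) J), ?_, fun x => ?_⟩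
  · simpa using update_sub_mem_lowerTerms (v := -g) (by convert add_mem hu₂ hu₁ using 1; abel) J
  · rw [word_eq_mul n J g, word_update n J, ← hw₂, ← hw₁, Pi.neg_apply, map_neg,
      map_neg_eq_inv hn]
    group

theorem WordsClosed.of_succ (hn : ∀ i s t, n i (s + t) = n i s * n i t)
    (hcomm : CommutatorFormula n) (J : Fin m) (h : WordsClosed ℓ n (J + 1)) :
    WordsClosed ℓ n J :=
  let ⟨hmul, hinv, hconj⟩ := h
  ⟨mulClosed_of_succ hn J hmul hconj, invClosed_of_succ hn J hinv hconj,
    conjClosed_of_succ hn hcomm J hmul hinv hconj⟩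

theorem wordsClosed (hn : ∀ i s t, n i (s + t) = n i s * n i t) (hcomm : CommutatorFormula n)
    {j : ℕ} (hj : j ≤ m) : WordsClosed ℓ n j := by
  induction hj using Nat.decreasingInduction with
  | self => exact wordsClosed_of_le le_rfl
  | of_succ j hj ih => exact ih.of_succ hn hcomm ⟨j, hj⟩

theorem exists_word_eq_inv_mul (hn : ∀ i s t, n i (s + t) = n i s * n i t)
    (hcomm : CommutatorFormula n) {a b : Fin m → MvPolynomial σ k} (ha : a ∈ triangular k ℓ)
    (hb : b ∈ triangular k ℓ) :
    ∃ u, u - (b - a) ∈ lowerTerms k ℓ ∧ ∀ x, (word n a 0 x)⁻¹ * word n b 0 x = word n u 0 x := by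
  obtain ⟨hmul, hinv, -⟩ := wordsClosed (ℓ := ℓ) hn hcomm m.zero_le
  obtain ⟨a', ha', hwa⟩ := hinv a ha
  obtain ⟨u, hu, hwu⟩ := hmul a' (mem_triangular_of_sub_mem (neg_mem ha) (by simpa using ha')) b hb
  refine ⟨u, ?_, fun x => by rw [hwa, hwu]⟩
  convert add_mem hu ha' using 1
  abel

end Collection

end UnipotentCollection

end

open UnipotentCollection in
/-- Commutator formula in a unipotent group (Lemma `comm_ss_unip`): let `G` be a group, `k`
a field, and `n_1, …, n_m : k → G` coordinate one-parameter subgroups (indexed by a linearly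
ordered set of roots such that no root is a sum of larger roots, encoded by the hypothesis
that commutators of `n_i, n_j` with `i < j` land in coordinates of index `> j`, with
polynomial coordinates). Then there exist polynomials `P_i` in the variables `t_ν, ν(γ)`
(`ν < i`), independent of `γ` and `n`, such that for every `γ` acting on each coordinate
subgroup by the character value `χ_i = λ_i(γ)` and every `n = ∏ n_i(t_i)`, the commutator
`γ n⁻¹ γ⁻¹ n` equals `∏_i n_i((1 − χ_i) t_i + P_i(t, χ))`. -/
theorem stmt12 {G : Type*} [Group G] {k : Type*} [Field k] (m : ℕ)
    (n : Fin m → k → G) (hn : ∀ i s t, n i (s + t) = n i s * n i t)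
    (hcomm : ∀ i j : Fin m, i < j → ∃ Q : Fin m → MvPolynomial Bool k,
      (∀ l : Fin m, l ≤ j → Q l = 0) ∧
      ∀ s t : k, (n i s)⁻¹ * (n j t)⁻¹ * n i s * n j t =
        ((List.finRange m).map fun l =>
          n l (MvPolynomial.eval (fun b => if b then t else s) (Q l))).prod) :
    ∃ P : Fin m → MvPolynomial (Fin m × Bool) k,
      (∀ i : Fin m, ∀ p ∈ (P i).vars, p.1 < i) ∧
      ∀ (γ : G) (χ : Fin m → k), (∀ i t, γ * n i t * γ⁻¹ = n i (χ i * t)) →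
      ∀ t : Fin m → k,
        γ * (((List.finRange m).map fun i => n i (t i)).prod)⁻¹ * γ⁻¹ *
            ((List.finRange m).map fun i => n i (t i)).prod =
          ((List.finRange m).map fun i =>
            n i ((1 - χ i) * t i +
              MvPolynomial.eval (fun p : Fin m × Bool => if p.2 then t p.1 else χ p.1)
                (P i))).prod := by
  let ℓ : Fin m × Bool → ℕ := fun p => p.1
  -- `(l, true)` stands for `t_l` and `(l, false)` for `χ_l`, so `a` and `b` are the coordinates
  -- of `γ n γ⁻¹` and of `n`.
  let a : Fin m → MvPolynomial (Fin m × Bool) k := fun l => X (l, false) * X (l, true)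
  let b : Fin m → MvPolynomial (Fin m × Bool) k := fun l => X (l, true)
  have hX (l : Fin m) (c : Bool) : X (l, c) ∈ supportedBelow k ℓ (l + 1) :=
    mem_supported.2 (by simp [ℓ, vars_X])
  have ha : a ∈ triangular k ℓ := mem_triangular.2 fun l => mul_mem (hX l false) (hX l true)
  have hb : b ∈ triangular k ℓ := mem_triangular.2 fun l => hX l true
  obtain ⟨u, hu, hwu⟩ := exists_word_eq_inv_mul hn hcomm ha hb
  refine ⟨u - (b - a), fun i p hp => mem_supported.1 (mem_lowerTerms.1 hu i) hp,
    fun γ χ hχ t => ?_⟩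
  let x : Fin m × Bool → k := fun p => if p.2 then t p.1 else χ p.1
  have hγ : γ * word n b 0 x * γ⁻¹ = word n a 0 x := by
    simp only [word_zero, ← MulAut.conj_apply, map_list_prod, List.map_map]
    simp [x, a, b, Function.comp_def, hχ]
  have hb_word : word n b 0 x = ((List.finRange m).map fun i => n i (t i)).prod := by
    simp [word_zero, x, b]
  calc _ = (γ * word n b 0 x * γ⁻¹)⁻¹ * word n b 0 x := by rw [hb_word]; group
    _ = word n u 0 x := by rw [hγ, hwu]
    _ = _ := by
      simp only [word_zero, Pi.sub_apply, map_sub, map_mul, eval_X, x, a, b]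
      refine congrArg List.prod (List.map_congr_left fun i _ => congrArg (n i) ?_)
      simp only [if_true, Bool.false_eq_true, if_false]
      ring
end

section
/- Let N be a simply connected nilpotent Lie group with Lie algebra 𝔫 graded by a finite set of 'roots' with one-parameter coordinate subgroups, and let φ: N → N be a smooth map whose differential at every point, expressed in the root-coordinate basis, is upper triangular with constant diagonal entries (1 − a_λ), all nonzero. Then φ is a diffeomorphism of N onto N with constant Jacobian determinant ∏_λ (1 − a_λ). -/
theorem update_invariant_of_partial_zero {n : ℕ} (f : (Fin n → ℝ) → ℝ)
    (hf : Differentiable ℝ f) (j : Fin n)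
    (hj : ∀ x : Fin n → ℝ, fderiv ℝ f x (Pi.single j 1) = 0)
    (x : Fin n → ℝ) (c : ℝ) : f (Function.update x j c) = f x := by
  set F : ℝ → ℝ := fun t => f (x + (t - x j) • (Pi.single j 1 : Fin n → ℝ)) with hF
  have hupd : ∀ t : ℝ, Function.update x j t = x + (t - x j) • (Pi.single j 1 : Fin n → ℝ) := by
    intro t; funext k
    by_cases hk : k = j
    · subst hk; simp
    · simp [Function.update, hk, Pi.single_eq_of_ne hk]
  have key : ∀ t : ℝ, HasDerivAt F 0 t := by
    intro t
    have hL : HasDerivAt (fun t : ℝ => x + (t - x j) • (Pi.single j 1 : Fin n → ℝ))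
        ((1 : ℝ) • (Pi.single j 1 : Fin n → ℝ)) t := by
      have : HasDerivAt (fun t : ℝ => t - x j) 1 t := (hasDerivAt_id t).sub_const _
      exact (this.smul_const _).const_add x
    have hcomp := (hf _).hasFDerivAt.comp_hasDerivAt t hL
    have : fderiv ℝ f (x + (t - x j) • (Pi.single j 1 : Fin n → ℝ)) ((1 : ℝ) • (Pi.single j 1 : Fin n → ℝ)) = 0 := by
      rw [one_smul]; exact hj _
    rwa [this] at hcomp
  have hconst : F c = F (x j) := by
    have : ∀ t : ℝ, deriv F t = 0 := fun t => (key t).deriv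
    have hdF : Differentiable ℝ F := fun t => (key t).differentiableAt
    exact is_const_of_deriv_eq_zero hdF this c (x j)
  calc f (Function.update x j c) = F c := by rw [hupd]
    _ = F (x j) := hconst
    _ = f x := by simp [hF]

/-- the function `x ↦ φ x i − (1−a i)·x i` depends only on the coordinates `j < i`. -/
theorem sub_depends {n : ℕ} (a : Fin n → ℝ)
    (φ : (Fin n → ℝ) → (Fin n → ℝ)) (hφ : ContDiff ℝ (⊤ : ℕ∞) φ)
    (hdiag : ∀ (x : Fin n → ℝ) (i : Fin n), fderiv ℝ φ x (Pi.single i 1) i = 1 - a i)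
    (htriang : ∀ (x : Fin n → ℝ) (i j : Fin n), i < j →
      fderiv ℝ φ x (Pi.single j 1) i = 0)
    (i : Fin n) (x x' : Fin n → ℝ) (h : ∀ j, j < i → x j = x' j) :
    φ x i - (1 - a i) * x i = φ x' i - (1 - a i) * x' i := by
  have hφd : Differentiable ℝ φ := hφ.differentiable (by simp)
  set f : (Fin n → ℝ) → ℝ := fun z => φ z i - (1 - a i) * z i with hfdef
  have hder : ∀ z : Fin n → ℝ, HasFDerivAt f
      ((ContinuousLinearMap.proj i).comp (fderiv ℝ φ z)
        - (1 - a i) • (ContinuousLinearMap.proj (R := ℝ) (φ := fun _ : Fin n => ℝ) i)) z := by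
    intro z
    have h1 : HasFDerivAt (fun w : Fin n → ℝ => φ w i)
        ((ContinuousLinearMap.proj i).comp (fderiv ℝ φ z)) z := by
      exact
        (ContinuousLinearMap.proj (R := ℝ) (φ := fun _ : Fin n => ℝ) i).hasFDerivAt.comp z
          (hφd z).hasFDerivAt
    have h2 : HasFDerivAt (fun w : Fin n → ℝ => (1 - a i) * w i)
        ((1 - a i) • (ContinuousLinearMap.proj (R := ℝ) (φ := fun _ : Fin n => ℝ) i)) z := by
      have := ((1 - a i) • (ContinuousLinearMap.proj (R := ℝ)
        (φ := fun _ : Fin n => ℝ) i)).hasFDerivAt (x := z)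
      convert this using 1
      ext w; simp
    exact h1.sub h2
  have hdf : Differentiable ℝ f := fun z => (hder z).differentiableAt
  have hzero : ∀ (j : Fin n), ¬ j < i → ∀ z : Fin n → ℝ,
      fderiv ℝ f z (Pi.single j 1 : Fin n → ℝ) = 0 := by
    intro j hj z
    rw [(hder z).fderiv]
    simp only [ContinuousLinearMap.sub_apply, ContinuousLinearMap.comp_apply,
      ContinuousLinearMap.smul_apply, ContinuousLinearMap.proj_apply]
    rcases lt_or_eq_of_le (not_lt.mp hj) with hlt | heq
    · rw [htriang z i j hlt]
      simp [Pi.single_eq_of_ne (ne_of_lt hlt)]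
    · subst heq
      rw [hdiag z i]
      simp
  have key : ∀ (S : Finset (Fin n)), (∀ j ∈ S, ¬ j < i) →
      ∀ u v : Fin n → ℝ, (∀ j, j ∉ S → u j = v j) → f u = f v := by
    intro S
    induction S using Finset.induction_on with
    | empty =>
      intro _ u v huv
      have : u = v := funext fun j => huv j (Finset.notMem_empty j)
      rw [this]
    | @insert j S hjS IH =>
      intro hmem u v huv
      set v' := Function.update v j (u j) with hv'
      have h1 : f u = f v' := by
        apply IH (fun k hk => hmem k (Finset.mem_insert_of_mem hk))
        intro k hk
        by_cases hkj : k = j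
        · subst hkj; simp [hv']
        · rw [hv', Function.update_of_ne hkj]
          exact huv k (by simp [hkj, hk])
      have h2 : f v' = f v :=
        update_invariant_of_partial_zero f hdf j
          (hzero j (hmem j (Finset.mem_insert_self j S))) v (u j)
      rw [h1, h2]
  exact key (Finset.univ.filter fun j => ¬ j < i) (by simp) x x' (by
    intro j hj
    simp only [Finset.mem_filter, Finset.mem_univ, true_and, not_not] at hj
    exact h j hj)

noncomputable def invAux {n : ℕ} (φ : (Fin n → ℝ) → (Fin n → ℝ)) (a : Fin n → ℝ)
    (y : Fin n → ℝ) (i : Fin n) : ℝ :=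
  (y i - φ (fun j => if h : (j : ℕ) < (i : ℕ) then invAux φ a y j else 0) i) / (1 - a i)
termination_by (i : ℕ)
decreasing_by exact h



/-- A simply connected nilpotent Lie group in root coordinates is `ℝ^n`; let
`φ : ℝ^n → ℝ^n` be a smooth map whose differential at every point, in the root-coordinate
basis, is triangular with constant nonzero diagonal entries `1 − a_i`. Then `φ` is a
diffeomorphism of `ℝ^n` onto `ℝ^n` with constant Jacobian determinant `∏_i (1 − a_i)`. -/
theorem stmt13 (n : ℕ) (a : Fin n → ℝ) (ha : ∀ i, a i ≠ 1)
    (φ : (Fin n → ℝ) → (Fin n → ℝ)) (hφ : ContDiff ℝ (⊤ : ℕ∞) φ)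
    (hdiag : ∀ (x : Fin n → ℝ) (i : Fin n), fderiv ℝ φ x (Pi.single i 1) i = 1 - a i)
    (htriang : ∀ (x : Fin n → ℝ) (i j : Fin n), i < j →
      fderiv ℝ φ x (Pi.single j 1) i = 0) :
    (∃ e : (Fin n → ℝ) ≃ (Fin n → ℝ), ⇑e = φ ∧ ContDiff ℝ (⊤ : ℕ∞) (⇑e.symm)) ∧
    ∀ x : Fin n → ℝ, (fderiv ℝ φ x).det = ∏ i, (1 - a i) := by
  have hD : ∀ i, (1 : ℝ) - a i ≠ 0 := fun i => sub_ne_zero.mpr (Ne.symm (ha i))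
  have hφd : Differentiable ℝ φ := hφ.differentiable (by simp)
  -- the determinant computation
  have hdet : ∀ x : Fin n → ℝ, (fderiv ℝ φ x).det = ∏ i, (1 - a i) := by
    intro x
    set M := LinearMap.toMatrix (Pi.basisFun ℝ (Fin n)) (Pi.basisFun ℝ (Fin n))
      ((fderiv ℝ φ x) : (Fin n → ℝ) →ₗ[ℝ] (Fin n → ℝ)) with hMdef
    have hM : ∀ i j, M i j = fderiv ℝ φ x (Pi.single j 1) i := by
      intro i j
      rw [hMdef, LinearMap.toMatrix_apply]
      simp
    have h1 : (fderiv ℝ φ x).det = M.det := by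
      show LinearMap.det _ = M.det
      rw [hMdef]
      exact (LinearMap.det_toMatrix _ _).symm
    have htri : M.BlockTriangular OrderDual.toDual := by
      intro i j hij
      rw [hM]
      exact htriang x i j hij
    rw [h1, Matrix.det_of_lowerTriangular M htri]
    exact Finset.prod_congr rfl fun i _ => by rw [hM, hdiag]
  -- right inverse
  have hRI : ∀ y : Fin n → ℝ, φ (invAux φ a y) = y := by
    intro y
    funext i
    set x₀ : Fin n → ℝ := fun j => if h : (j : ℕ) < (i : ℕ) then invAux φ a y j else 0
      with hx₀
    have hψ : invAux φ a y i = (y i - φ x₀ i) / (1 - a i) := by rw [invAux]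
    have hagree : ∀ j, j < i → invAux φ a y j = x₀ j := by
      intro j hj
      rw [hx₀]
      simp [Fin.lt_def.mp hj]
    have hsub := sub_depends a φ hφ hdiag htriang i (invAux φ a y) x₀ hagree
    have hx₀i : x₀ i = 0 := by simp [hx₀]
    rw [hx₀i, mul_zero, sub_zero] at hsub
    rw [sub_eq_iff_eq_add] at hsub
    rw [hsub, hψ, mul_div_cancel₀ _ (hD i), add_sub_cancel]
  -- injectivity
  have hinj : Function.Injective φ := by
    intro x x' hfeq
    funext i
    have key : ∀ m : ℕ, ∀ i : Fin n, (i : ℕ) < m → x i = x' i := by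
      intro m
      induction m with
      | zero => intro i hi; exact absurd hi (Nat.not_lt_zero _)
      | succ m IH =>
        intro i hi
        have hpre : ∀ j, j < i → x j = x' j := fun j hj =>
          IH j (by have := Fin.lt_def.mp hj; omega)
        have hsub := sub_depends a φ hφ hdiag htriang i x x' hpre
        have hfi : φ x i = φ x' i := congrFun hfeq i
        rw [hfi] at hsub
        have : (1 - a i) * x i = (1 - a i) * x' i := by linarith
        exact mul_left_cancel₀ (hD i) this
    exact key ((i : ℕ) + 1) i (Nat.lt_succ_self _)
  have hLI : ∀ x : Fin n → ℝ, invAux φ a (φ x) = x := fun x => hinj (hRI (φ x))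
  set e : (Fin n → ℝ) ≃ (Fin n → ℝ) := ⟨φ, invAux φ a, hLI, hRI⟩ with hedef
  have hsymm : ⇑e.symm = invAux φ a := rfl
  -- smoothness of the inverse
  have hinv : ContDiff ℝ (⊤ : ℕ∞) (invAux φ a) := by
    rw [contDiff_iff_contDiffAt]
    intro y
    set x : Fin n → ℝ := invAux φ a y with hx
    have hyx : y = φ x := (hRI y).symm
    have hdetne : (fderiv ℝ φ x).det ≠ 0 := by
      rw [hdet x]
      exact Finset.prod_ne_zero_iff.mpr fun i _ => hD i
    set f' : (Fin n → ℝ) ≃L[ℝ] (Fin n → ℝ) :=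
      (fderiv ℝ φ x).toContinuousLinearEquivOfDetNeZero hdetne with hf'def
    have hf' : HasFDerivAt φ (f' : (Fin n → ℝ) →L[ℝ] (Fin n → ℝ)) x := by
      rw [hf'def, ContinuousLinearMap.coe_toContinuousLinearEquivOfDetNeZero]
      exact (hφd x).hasFDerivAt
    have hca : ContDiffAt ℝ (⊤ : ℕ∞) φ x := hφ.contDiffAt
    have hg : ContDiffAt ℝ (⊤ : ℕ∞) (hca.localInverse hf' (by simp)) (φ x) :=
      hca.to_localInverse hf' (by simp)
    have heq : invAux φ a =ᶠ[nhds (φ x)] (hca.localInverse hf' (by simp)) := by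
      have hev := (hca.hasStrictFDerivAt' hf' (by simp)).eventually_right_inverse
      filter_upwards [hev] with z hz
      conv_lhs => rw [← hz]
      rw [hLI]
      rfl
    rw [hyx]
    exact hg.congr_of_eventuallyEq heq
  exact ⟨⟨e, rfl, by rw [hsymm]; exact hinv⟩, hdet⟩
end
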